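/- Let V^• be a Z-graded vector space with two anticommuting square-zero endomorphisms δ₁, δ₂ of coprime degrees |δ₁|, |δ₂|, with finite-dimensional δ₁- and δ₂-cohomology in each degree. Then for every j: dim H^j_{BC}(V) + dim H^j_A(V) ≥ dim H^j_{δ₁}(V) + dim H^j_{δ₂}(V). -/

import Mathlib

/-!
The maps `[z] ↦ ([z], [z])` and `([x], [y]) ↦ [x] - [y]` form a sequence
`H_BC → H_{δ₁} ⊕ H_{δ₂} → H_A` that is exact in the middle: if `x - y = δ₁ u + δ₂ v`, the grading
lets us take `u`, `v` homogeneous, and then `z = x - δ₁ u = y + δ₂ v` is a `δ₁`- and `δ₂`-closed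
class of degree `j` mapping to `([x], [y])`. Rank–nullity for the second map then bounds
`dim H_{δ₁} + dim H_{δ₂}` by `dim H_A + dim H_BC`.
-/

open LinearMap

/-- The (cardinal) dimension of the quotient `A / (A ∩ B)` of submodules. -/
noncomputable def qrank {K V : Type*} [Field K] [AddCommGroup V] [Module K V]
    (A B : Submodule K V) : Cardinal :=
  Module.rank K (↥A ⧸ B.comap A.subtype)

universe u

theorem rank_le_rank_add_rank_of_ker_le_range {K : Type*} [DivisionRing K] {A B C : Type u}
    [AddCommGroup A] [Module K A] [AddCommGroup B] [Module K B] [AddCommGroup C] [Module K C]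
    (φ : A →ₗ[K] B) (ψ : B →ₗ[K] C) (h : ker ψ ≤ range φ) :
    Module.rank K B ≤ Module.rank K A + Module.rank K C :=
  calc Module.rank K B = Module.rank K (range ψ) + Module.rank K (ker ψ) :=
        ψ.rank_range_add_rank_ker.symm
    _ ≤ Module.rank K C + Module.rank K A :=
        add_le_add (Submodule.rank_le _) ((Submodule.rank_mono h).trans (rank_range_le φ))
    _ = Module.rank K A + Module.rank K C := add_comm _ _

section QuotientRank

variable {K V : Type*} [Field K] [AddCommGroup V] [Module K V]

noncomputable def qmap {A B A' B' : Submodule K V} (hA : A ≤ A') (hB : A ⊓ B ≤ B') :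
    (A ⧸ B.comap A.subtype) →ₗ[K] (A' ⧸ B'.comap A'.subtype) :=
  Submodule.mapQ _ _ (Submodule.inclusion hA) fun x hx => hB ⟨x.2, hx⟩

theorem qrank_add_qrank_le {P Q A₁ B₁ A₂ B₂ R S : Submodule K V}
    (hP₁ : P ≤ A₁) (hP₂ : P ≤ A₂) (hA₁ : A₁ ≤ R) (hA₂ : A₂ ≤ R)
    (hQ₁ : P ⊓ Q ≤ B₁) (hQ₂ : P ⊓ Q ≤ B₂) (hB₁ : A₁ ⊓ B₁ ≤ S) (hB₂ : A₂ ⊓ B₂ ≤ S)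
    (hexact : ∀ x ∈ A₁, ∀ y ∈ A₂, x - y ∈ S → ∃ z ∈ P, z - x ∈ B₁ ∧ z - y ∈ B₂) :
    qrank A₁ B₁ + qrank A₂ B₂ ≤ qrank P Q + qrank R S := by
  let φ := (qmap hP₁ hQ₁).prod (qmap hP₂ hQ₂)
  let ψ := qmap hA₁ hB₁ ∘ₗ LinearMap.fst K _ _ - qmap hA₂ hB₂ ∘ₗ LinearMap.snd K _ _
  have hker : ker ψ ≤ range φ := by
    rintro ⟨c₁, c₂⟩ hc
    obtain ⟨x, rfl⟩ := Submodule.Quotient.mk_surjective _ c₁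
    obtain ⟨y, rfl⟩ := Submodule.Quotient.mk_surjective _ c₂
    have hc' : qmap hA₁ hB₁ (Submodule.Quotient.mk x) = qmap hA₂ hB₂ (Submodule.Quotient.mk y) :=
      sub_eq_zero.1 hc
    obtain ⟨z, hz, hzx, hzy⟩ :=
      hexact x x.2 y y.2 ((Submodule.Quotient.eq (S.comap R.subtype)).1 hc')
    exact ⟨Submodule.Quotient.mk ⟨z, hz⟩,
      Prod.ext ((Submodule.Quotient.eq (B₁.comap A₁.subtype)).2 hzx)
        ((Submodule.Quotient.eq (B₂.comap A₂.subtype)).2 hzy)⟩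
  exact (rank_add_rank_le_rank_prod K _).trans (rank_le_rank_add_rank_of_ker_le_range φ ψ hker)

end QuotientRank

section Graded

variable {ι R M : Type*} [AddGroup ι] [DecidableEq ι] [Ring R] [AddCommGroup M] [Module R M]
  (𝒱 : ι → Submodule R M) [DirectSum.Decomposition 𝒱]

theorem decompose_map_of_homogeneous (δ : M →ₗ[R] M) (c : ι)
    (hδ : ∀ p, ∀ x ∈ 𝒱 p, δ x ∈ 𝒱 (p + c)) (i : ι) (x : M) :
    (DirectSum.decompose 𝒱 (δ x) i : M) = δ (DirectSum.decompose 𝒱 x (i - c)) := by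
  induction x using DirectSum.Decomposition.inductionOn 𝒱 with
  | zero => simp
  | @homogeneous p m =>
    by_cases h : p + c = i
    · subst h
      rw [DirectSum.decompose_of_mem_same 𝒱 (hδ p m m.2), add_sub_cancel_right,
        DirectSum.decompose_of_mem_same 𝒱 m.2]
    · have h' : p ≠ i - c := fun h' => h (by rw [h', sub_add_cancel])
      rw [DirectSum.decompose_of_mem_ne 𝒱 (hδ p m m.2) h, DirectSum.decompose_of_mem_ne 𝒱 m.2 h',
        map_zero]
  | add x y hx hy => simp [DirectSum.decompose_add, hx, hy]

variable {𝒱} {a b : ι} {δ₁ δ₂ : M →ₗ[R] M}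

theorem exists_homogeneous_of_mem_range_sup_range
    (hδ₁ : ∀ p, ∀ x ∈ 𝒱 p, δ₁ x ∈ 𝒱 (p + a)) (hδ₂ : ∀ p, ∀ x ∈ 𝒱 p, δ₂ x ∈ 𝒱 (p + b))
    {j : ι} {w : M} (hw : w ∈ 𝒱 j)
    (hsup : w ∈ range δ₁ ⊔ range δ₂) : ∃ u ∈ 𝒱 (j - a), ∃ v ∈ 𝒱 (j - b), δ₁ u + δ₂ v = w := by
  obtain ⟨_, ⟨s, rfl⟩, _, ⟨t, rfl⟩, rfl⟩ := Submodule.mem_sup.1 hsup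
  refine ⟨_, (DirectSum.decompose 𝒱 s (j - a)).2, _, (DirectSum.decompose 𝒱 t (j - b)).2, ?_⟩
  rw [← decompose_map_of_homogeneous 𝒱 δ₁ a hδ₁, ← decompose_map_of_homogeneous 𝒱 δ₂ b hδ₂,
    ← Submodule.coe_add, ← DirectSum.add_apply, ← DirectSum.decompose_add,
    DirectSum.decompose_of_mem_same 𝒱 hw]

theorem exists_mem_ker_inf_ker_of_sub_mem_range_sup_range
    (hδ₁ : ∀ p, ∀ x ∈ 𝒱 p, δ₁ x ∈ 𝒱 (p + a)) (hδ₂ : ∀ p, ∀ x ∈ 𝒱 p, δ₂ x ∈ 𝒱 (p + b))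
    (h1 : δ₁ ∘ₗ δ₁ = 0) (h2 : δ₂ ∘ₗ δ₂ = 0) {j : ι} {x y : M}
    (hx : x ∈ ker δ₁ ⊓ 𝒱 j) (hy : y ∈ ker δ₂ ⊓ 𝒱 j) (hxy : x - y ∈ range δ₁ ⊔ range δ₂) :
    ∃ z ∈ ker δ₁ ⊓ ker δ₂ ⊓ 𝒱 j, z - x ∈ range δ₁ ∧ z - y ∈ range δ₂ := by
  obtain ⟨u, hu, v, -, huv⟩ :=
    exists_homogeneous_of_mem_range_sup_range hδ₁ hδ₂ (sub_mem hx.2 hy.2) hxy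
  have hz : x - δ₁ u = y + δ₂ v :=
    calc x - δ₁ u = δ₁ u + δ₂ v + y - δ₁ u := by rw [huv, sub_add_cancel]
      _ = y + δ₂ v := by abel
  have hδ₁u : δ₁ u ∈ 𝒱 j := by simpa using hδ₁ _ u hu
  refine ⟨x - δ₁ u, ⟨⟨?_, ?_⟩, sub_mem hx.2 hδ₁u⟩, ⟨-u, by simp⟩,
    ⟨v, by rw [hz, add_sub_cancel_left]⟩⟩
  · exact sub_mem hx.1 (range_le_ker_iff.2 h1 ⟨u, rfl⟩)
  · rw [hz]
    exact add_mem hy.1 (range_le_ker_iff.2 h2 ⟨v, rfl⟩)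

end Graded

theorem frolicher_type_inequality_graded_general
    {K V : Type*} [Field K] [AddCommGroup V] [Module K V]
    (𝒱 : ℤ → Submodule K V) (hinternal : DirectSum.IsInternal 𝒱)
    (a b : ℤ)
    (δ₁ δ₂ : V →ₗ[K] V)
    (hδ₁deg : ∀ p : ℤ, ∀ x ∈ 𝒱 p, δ₁ x ∈ 𝒱 (p + a))
    (hδ₂deg : ∀ p : ℤ, ∀ x ∈ 𝒱 p, δ₂ x ∈ 𝒱 (p + b))
    (h1 : δ₁ ∘ₗ δ₁ = 0) (h2 : δ₂ ∘ₗ δ₂ = 0) (h12 : δ₁ ∘ₗ δ₂ + δ₂ ∘ₗ δ₁ = 0) :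
    ∀ j : ℤ,
      qrank (ker δ₁ ⊓ 𝒱 j) (range δ₁) + qrank (ker δ₂ ⊓ 𝒱 j) (range δ₂) ≤
        qrank (ker δ₁ ⊓ ker δ₂ ⊓ 𝒱 j) (range (δ₁ ∘ₗ δ₂)) +
          qrank (ker (δ₁ ∘ₗ δ₂) ⊓ 𝒱 j) (range δ₁ ⊔ range δ₂) := by
  intro j
  let _ := hinternal.chooseDecomposition
  have hanti : δ₁ ∘ₗ δ₂ = -(δ₂ ∘ₗ δ₁) := eq_neg_of_add_eq_zero_left h12
  refine qrank_add_qrank_le (inf_le_inf_right _ inf_le_left) (inf_le_inf_right _ inf_le_right)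
    (inf_le_inf_right _ ?_) (inf_le_inf_right _ (ker_le_ker_comp δ₂ δ₁))
    (inf_le_right.trans (range_comp_le_range δ₂ δ₁)) (inf_le_right.trans ?_)
    (inf_le_right.trans le_sup_left) (inf_le_right.trans le_sup_right)
    fun x hx y hy hxy =>
      exists_mem_ker_inf_ker_of_sub_mem_range_sup_range hδ₁deg hδ₂deg h1 h2 hx hy hxy
  · rw [hanti, ker_neg]
    exact ker_le_ker_comp δ₁ δ₂
  · rw [hanti, range_neg]
    exact range_comp_le_range δ₁ δ₂

theorem frolicher_type_inequality_graded
    {K V : Type*} [Field K] [AddCommGroup V] [Module K V]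
    (𝒱 : ℤ → Submodule K V) (hinternal : DirectSum.IsInternal 𝒱)
    (a b : ℤ) (hcoprime : Int.gcd a b = 1)
    (δ₁ δ₂ : V →ₗ[K] V)
    (hδ₁deg : ∀ p : ℤ, ∀ x ∈ 𝒱 p, δ₁ x ∈ 𝒱 (p + a))
    (hδ₂deg : ∀ p : ℤ, ∀ x ∈ 𝒱 p, δ₂ x ∈ 𝒱 (p + b))
    (h1 : δ₁ ∘ₗ δ₁ = 0) (h2 : δ₂ ∘ₗ δ₂ = 0) (h12 : δ₁ ∘ₗ δ₂ + δ₂ ∘ₗ δ₁ = 0)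
    (hfin : ∀ j : ℤ,
      qrank (ker δ₁ ⊓ 𝒱 j) (range δ₁) < Cardinal.aleph0 ∧
      qrank (ker δ₂ ⊓ 𝒱 j) (range δ₂) < Cardinal.aleph0) :
    ∀ j : ℤ,
      qrank (ker δ₁ ⊓ 𝒱 j) (range δ₁) + qrank (ker δ₂ ⊓ 𝒱 j) (range δ₂) ≤
        qrank (ker δ₁ ⊓ ker δ₂ ⊓ 𝒱 j) (range (δ₁ ∘ₗ δ₂)) +
          qrank (ker (δ₁ ∘ₗ δ₂) ⊓ 𝒱 j) (range δ₁ ⊔ range δ₂) :=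
  frolicher_type_inequality_graded_general 𝒱 hinternal a b δ₁ δ₂ hδ₁deg hδ₂deg h1 h2 h12
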